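/- arXiv:1709.06502 — 2 statements merged into one kernel-verified Lean document; each statement's English description precedes it below -/
import Mathlib

section
/- Let T be a nonempty compact Hausdorff space, M a pseudo MV-algebra, and s a (C(T), 1_T)-state-morphism on M. Then Ker(s) is a maximal ideal of M if and only if there exists a state-morphism s₀ : M → [0,1] such that s(x) = s₀(x) · 1_T for all x ∈ M. -/
/-!
Every evaluation `s_t : x ↦ s(x)(t)` is a real state-morphism, and the kernel of a real
state-morphism is a maximal ideal: an ideal containing it and an element of positive value
contains, by repeated doubling `x ↦ x ⊕ x`, an element `y` of value `1`, hence also `¬y` and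
`y ⊕ ¬y = u`. Since `Ker s ⊆ Ker s_t`, maximality of `Ker s` makes all kernels `Ker s_t` equal.
Finally, two real state-morphisms with the same kernel agree, because any gap `σ x < τ x` can
be stretched by the tent map until `σ` vanishes at an element where `τ` does not.
-/

section

variable {G : Type*} [Lattice G] [AddGroup G]
  [CovariantClass G G (· + ·) (· ≤ ·)]
  [CovariantClass G G (Function.swap (· + ·)) (· ≤ ·)]

/-- An ideal of the pseudo MV-algebra `Γ(G,u) = [0,u]`. -/
def IsMVIdeal (u : G) (I : Set G) : Prop :=
  I ⊆ {x : G | 0 ≤ x ∧ x ≤ u} ∧ I.Nonempty ∧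
  (∀ a b : G, b ∈ I → 0 ≤ a → a ≤ b → a ∈ I) ∧
  (∀ a ∈ I, ∀ b ∈ I, (a + b) ⊓ u ∈ I)

/-- A maximal ideal of `Γ(G,u)`. -/
def IsMaximalMVIdeal (u : G) (I : Set G) : Prop :=
  IsMVIdeal u I ∧ I ≠ {x : G | 0 ≤ x ∧ x ≤ u} ∧
  ∀ J : Set G, IsMVIdeal u J → I ⊆ J → J = I ∨ J = {x : G | 0 ≤ x ∧ x ≤ u}

end

section

variable {G : Type*} [Lattice G] [AddGroup G]

structure IsStateMorphism (u : G) (σ : G → ℝ) : Prop where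
  map_zero : σ 0 = 0
  map_top : σ u = 1
  mem_unitInterval : ∀ x : G, 0 ≤ x → x ≤ u → 0 ≤ σ x ∧ σ x ≤ 1
  map_oplus : ∀ x y : G, 0 ≤ x → x ≤ u → 0 ≤ y → y ≤ u →
    σ ((x + y) ⊓ u) = min (σ x + σ y) 1
  map_neg_left : ∀ x : G, 0 ≤ x → x ≤ u → σ (u + -x) = 1 - σ x
  map_neg_right : ∀ x : G, 0 ≤ x → x ≤ u → σ (-x + u) = 1 - σ x

def stateKer {A : Type*} [Zero A] (u : G) (f : G → A) : Set G :=
  {x : G | (0 ≤ x ∧ x ≤ u) ∧ f x = 0}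

theorem isStateMorphism_eval {T : Type*} [TopologicalSpace T] {u : G} {s : G → C(T, ℝ)}
    (hs0 : s 0 = 0) (hs1 : s u = 1)
    (hrange : ∀ x : G, 0 ≤ x → x ≤ u → 0 ≤ s x ∧ s x ≤ 1)
    (hoplus : ∀ x y : G, 0 ≤ x → x ≤ u → 0 ≤ y → y ≤ u →
      s ((x + y) ⊓ u) = (s x + s y) ⊓ 1)
    (hnegl : ∀ x : G, 0 ≤ x → x ≤ u → s (u + -x) = 1 - s x)
    (hnegr : ∀ x : G, 0 ≤ x → x ≤ u → s (-x + u) = 1 - s x) (t : T) :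
    IsStateMorphism u (fun x => s x t) where
  map_zero := by rw [hs0]; rfl
  map_top := by rw [hs1]; rfl
  mem_unitInterval x hx hxu := ⟨(hrange x hx hxu).1 t, (hrange x hx hxu).2 t⟩
  map_oplus x y hx hxu hy hyu := by rw [hoplus x y hx hxu hy hyu]; rfl
  map_neg_left x hx hxu := by rw [hnegl x hx hxu]; rfl
  map_neg_right x hx hxu := by rw [hnegr x hx hxu]; rfl

namespace IsStateMorphism

variable {u : G} {σ τ : G → ℝ}

theorem map_double (hσ : IsStateMorphism u σ) {x : G} (hx : 0 ≤ x) (hxu : x ≤ u) :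
    σ ((x + x) ⊓ u) = min (2 * σ x) 1 := by
  rw [hσ.map_oplus x x hx hxu hx hxu, two_mul]

theorem stateKer_ne_interval (hσ : IsStateMorphism u σ) (hu : 0 ≤ u) :
    stateKer u σ ≠ {x : G | 0 ≤ x ∧ x ≤ u} := fun h => by
  have hmem : u ∈ stateKer u σ := h ▸ ⟨hu, le_rfl⟩
  exact one_ne_zero (hσ.map_top.symm.trans hmem.2)

theorem exists_mem_map_eq_one (hσ : IsStateMorphism u σ) {J : Set G}
    (hJ : IsMVIdeal u J) {x : G} (hxJ : x ∈ J) (hσx : 0 < σ x) : ∃ y ∈ J, σ y = 1 := by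
  suffices key : ∀ n : ℕ, ∀ x ∈ J, 1 ≤ 2 ^ n * σ x → ∃ y ∈ J, σ y = 1 by
    obtain ⟨n, hn⟩ := pow_unbounded_of_one_lt (1 / σ x) one_lt_two
    exact key n x hxJ ((div_lt_iff₀ hσx).mp hn).le
  intro n
  induction n with
  | zero =>
    intro x hxJ hx
    obtain ⟨hx0, hxu⟩ := hJ.1 hxJ
    exact ⟨x, hxJ, le_antisymm (hσ.mem_unitInterval x hx0 hxu).2 (by simpa using hx)⟩
  | succ n ih =>
    intro x hxJ hx
    obtain ⟨hx0, hxu⟩ := hJ.1 hxJ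
    refine ih _ (hJ.2.2.2 x hxJ x hxJ) ?_
    rw [hσ.map_double hx0 hxu]
    rcases le_total (2 * σ x) 1 with h | h
    · rwa [min_eq_left h, ← mul_assoc, ← pow_succ]
    · rw [min_eq_right h, mul_one]
      exact one_le_pow₀ one_le_two

end IsStateMorphism

variable [AddLeftMono G]

theorem oplus_mem_interval {u x y : G} (hu : 0 ≤ u) (hx : 0 ≤ x) (hy : 0 ≤ y) :
    0 ≤ (x + y) ⊓ u ∧ (x + y) ⊓ u ≤ u :=
  ⟨le_inf (add_nonneg hx hy) hu, inf_le_right⟩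

variable [AddRightMono G]

theorem neg_add_mem_interval {x y : G} (hx : 0 ≤ x) (hxy : x ≤ y) :
    0 ≤ -x + y ∧ -x + y ≤ y :=
  ⟨le_neg_add_iff_le.mpr hxy, add_le_of_nonpos_left (neg_nonpos.mpr hx)⟩

namespace IsStateMorphism

variable {u : G} {σ τ : G → ℝ}

/-- `x ⊙ x = ¬(¬x ⊕ ¬x)`. -/
theorem map_square (hσ : IsStateMorphism u σ) {x : G} (hx : 0 ≤ x) (hxu : x ≤ u) :
    σ (-((-x + u + (-x + u)) ⊓ u) + u) = max (2 * σ x - 1) 0 := by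
  obtain ⟨hn, hnu⟩ := neg_add_mem_interval hx hxu
  obtain ⟨hd, hdu⟩ := oplus_mem_interval (hn.trans hnu) hn hn
  rw [hσ.map_neg_right _ hd hdu, hσ.map_double hn hnu, hσ.map_neg_right x hx hxu]
  rcases le_total (σ x) (1 / 2) with h | h
  · rw [min_eq_right (by linarith), max_eq_right (by linarith)]; ring
  · rw [min_eq_left (by linarith), max_eq_left (by linarith)]; ring

theorem isMVIdeal_stateKer (hσ : IsStateMorphism u σ) (hu : 0 ≤ u) :
    IsMVIdeal u (stateKer u σ) := by
  refine ⟨fun x hx => hx.1, ⟨0, ⟨le_rfl, hu⟩, hσ.map_zero⟩, ?_, ?_⟩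
  · rintro a b ⟨⟨hb, hbu⟩, hσb⟩ ha hab
    have hau : a ≤ u := hab.trans hbu
    obtain ⟨hc, hcb⟩ := neg_add_mem_interval ha hab
    have hcu : -a + b ≤ u := hcb.trans hbu
    have hsum := hσ.map_oplus a (-a + b) ha hau hc hcu
    rw [add_neg_cancel_left, inf_eq_left.mpr hbu, hσb] at hsum
    have := (hσ.mem_unitInterval a ha hau).1
    have := (hσ.mem_unitInterval _ hc hcu).1
    refine ⟨⟨ha, hau⟩, ?_⟩
    rcases min_eq_iff.mp hsum.symm with ⟨h, _⟩ | ⟨h, _⟩ <;> linarith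
  · rintro a ⟨⟨ha, hau⟩, hσa⟩ b ⟨⟨hb, hbu⟩, hσb⟩
    refine ⟨oplus_mem_interval hu ha hb, ?_⟩
    rw [hσ.map_oplus a b ha hau hb hbu, hσa, hσb]
    norm_num

theorem isMaximalMVIdeal_stateKer (hσ : IsStateMorphism u σ) (hu : 0 ≤ u) :
    IsMaximalMVIdeal u (stateKer u σ) := by
  refine ⟨hσ.isMVIdeal_stateKer hu, hσ.stateKer_ne_interval hu, fun J hJ hker => ?_⟩
  by_cases hJker : J ⊆ stateKer u σ
  · exact Or.inl (hJker.antisymm hker)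
  right
  obtain ⟨x, hxJ, hxker⟩ := Set.not_subset.mp hJker
  obtain ⟨hx0, hxu⟩ := hJ.1 hxJ
  have hσx : 0 < σ x :=
    (hσ.mem_unitInterval x hx0 hxu).1.lt_of_ne' fun h => hxker ⟨⟨hx0, hxu⟩, h⟩
  obtain ⟨y, hyJ, hσy⟩ := hσ.exists_mem_map_eq_one hJ hxJ hσx
  obtain ⟨hy0, hyu⟩ := hJ.1 hyJ
  have hnegJ : -y + u ∈ J :=
    hker ⟨neg_add_mem_interval hy0 hyu, by rw [hσ.map_neg_right y hy0 hyu, hσy, sub_self]⟩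
  have huJ : u ∈ J := by
    simpa only [add_neg_cancel_left, inf_idem] using hJ.2.2.2 y hyJ _ hnegJ
  exact hJ.1.antisymm fun z hz => hJ.2.2.1 z u huJ hz.1 hz.2

/-- The tent map `t ↦ min (2t) 1` for `t ≤ 1/2`, `t ↦ max (2t-1) 0` for `t > 1/2`, realized by
`x ⊕ x` and `x ⊙ x`, doubles the gap `τ x - σ x` until `σ` vanishes where `τ` does not. -/
theorem exists_separating (hσ : IsStateMorphism u σ) (hτ : IsStateMorphism u τ) :
    ∀ n : ℕ, ∀ x : G, 0 ≤ x → x ≤ u → σ x < τ x → 1 < 2 ^ n * (τ x - σ x) →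
      ∃ y ∈ stateKer u σ, 0 < τ y := by
  intro n
  induction n with
  | zero =>
    intro x hx hxu _ hgap
    linarith [(hσ.mem_unitInterval x hx hxu).1, (hτ.mem_unitInterval x hx hxu).2,
      pow_zero (2 : ℝ)]
  | succ n ih =>
    intro x hx hxu hlt hgap
    rw [pow_succ] at hgap
    have hσx := (hσ.mem_unitInterval x hx hxu).1
    have hu : 0 ≤ u := hx.trans hxu
    rcases le_or_gt (τ x) (1 / 2) with hτx | hτx
    · obtain ⟨hd, hdu⟩ := oplus_mem_interval hu hx hx
      refine ih _ hd hdu ?_ ?_ <;>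
        rw [hσ.map_double hx hxu, hτ.map_double hx hxu, min_eq_left (by linarith),
          min_eq_left (by linarith)] <;> linarith
    obtain ⟨hn, hnu⟩ := neg_add_mem_interval hx hxu
    obtain ⟨hd, hdu⟩ := oplus_mem_interval hu hn hn
    obtain ⟨hs, hsu⟩ := neg_add_mem_interval hd hdu
    have hτs := hτ.map_square hx hxu
    rw [max_eq_left (by linarith)] at hτs
    rcases le_or_gt (σ x) (1 / 2) with hσx' | hσx'
    · refine ⟨_, ⟨⟨hs, hsu⟩, ?_⟩, by linarith⟩
      rw [hσ.map_square hx hxu, max_eq_right (by linarith)]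
    refine ih _ hs hsu ?_ ?_ <;>
      rw [hσ.map_square hx hxu, hτs, max_eq_left (by linarith)] <;> linarith

theorem eqOn_of_stateKer_eq (hσ : IsStateMorphism u σ) (hτ : IsStateMorphism u τ)
    (hker : stateKer u σ = stateKer u τ) {x : G} (hx : 0 ≤ x) (hxu : x ≤ u) : σ x = τ x := by
  suffices key : ∀ {σ τ : G → ℝ}, IsStateMorphism u σ → IsStateMorphism u τ →
      stateKer u σ = stateKer u τ → ¬σ x < τ x from
    le_antisymm (not_lt.mp (key hτ hσ hker.symm)) (not_lt.mp (key hσ hτ hker))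
  intro σ τ hσ hτ hker hlt
  obtain ⟨n, hn⟩ := pow_unbounded_of_one_lt (1 / (τ x - σ x)) one_lt_two
  obtain ⟨y, hyσ, hτy⟩ := exists_separating hσ hτ n x hx hxu hlt
    (by rwa [div_lt_iff₀ (sub_pos.mpr hlt)] at hn)
  rw [hker] at hyσ
  exact hτy.ne' hyσ.2

end IsStateMorphism

end

section

variable {G : Type*} [Lattice G] [AddGroup G]
  [CovariantClass G G (· + ·) (· ≤ ·)]
  [CovariantClass G G (Function.swap (· + ·)) (· ≤ ·)]

theorem ct_state_morphism_maximal_kernel_iff_scalar_general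
    {T : Type*} [TopologicalSpace T] [Nonempty T]
    (u : G) (hu : 0 ≤ u)
    (s : G → C(T, ℝ))
    (hs0 : s 0 = 0) (hs1 : s u = 1)
    (hrange : ∀ x : G, 0 ≤ x → x ≤ u → 0 ≤ s x ∧ s x ≤ 1)
    (hoplus : ∀ x y : G, 0 ≤ x → x ≤ u → 0 ≤ y → y ≤ u →
      s ((x + y) ⊓ u) = (s x + s y) ⊓ 1)
    (hnegl : ∀ x : G, 0 ≤ x → x ≤ u → s (u + -x) = 1 - s x)
    (hnegr : ∀ x : G, 0 ≤ x → x ≤ u → s (-x + u) = 1 - s x) :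
    IsMaximalMVIdeal u {x : G | (0 ≤ x ∧ x ≤ u) ∧ s x = 0} ↔
    ∃ s₀ : G → ℝ,
      s₀ 0 = 0 ∧ s₀ u = 1 ∧
      (∀ x : G, 0 ≤ x → x ≤ u → 0 ≤ s₀ x ∧ s₀ x ≤ 1) ∧
      (∀ x y : G, 0 ≤ x → x ≤ u → 0 ≤ y → y ≤ u →
        s₀ ((x + y) ⊓ u) = min (s₀ x + s₀ y) 1) ∧
      (∀ x : G, 0 ≤ x → x ≤ u → s₀ (u + -x) = 1 - s₀ x) ∧
      (∀ x : G, 0 ≤ x → x ≤ u → s₀ (-x + u) = 1 - s₀ x) ∧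
      (∀ x : G, 0 ≤ x → x ≤ u → s x = s₀ x • (1 : C(T, ℝ))) := by
  have hev := isStateMorphism_eval hs0 hs1 hrange hoplus hnegl hnegr
  obtain ⟨t₀⟩ := ‹Nonempty T›
  constructor
  · intro hmax
    have hsub (t : T) : stateKer u s ⊆ stateKer u (fun x => s x t) :=
      fun x hx => ⟨hx.1, show s x t = 0 by rw [hx.2]; rfl⟩
    have hker (t : T) : stateKer u (fun x => s x t) = stateKer u s :=
      (hmax.2.2 _ ((hev t).isMVIdeal_stateKer hu) (hsub t)).resolve_right
        ((hev t).stateKer_ne_interval hu)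
    have h₀ := hev t₀
    refine ⟨_, h₀.map_zero, h₀.map_top, h₀.mem_unitInterval, h₀.map_oplus, h₀.map_neg_left,
      h₀.map_neg_right, fun x hx hxu => ?_⟩
    ext t
    simpa using (hev t).eqOn_of_stateKer_eq h₀ ((hker t).trans (hker t₀).symm) hx hxu
  · rintro ⟨s₀, h0, h1, hrange₀, hoplus₀, hnegl₀, hnegr₀, hscalar⟩
    have hker : stateKer u s = stateKer u s₀ := by
      ext x
      refine and_congr_right fun ⟨hx, hxu⟩ => ?_
      rw [hscalar x hx hxu, smul_eq_zero, or_iff_left one_ne_zero]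
    show IsMaximalMVIdeal u (stateKer u s)
    rw [hker]
    exact IsStateMorphism.isMaximalMVIdeal_stateKer
      ⟨h0, h1, hrange₀, hoplus₀, hnegl₀, hnegr₀⟩ hu

/-- For a `(C(T),1_T)`-state-morphism `s` on a pseudo MV-algebra
`Γ(G,u)` (`T` a nonempty compact Hausdorff space), `Ker(s)` is a maximal ideal iff
there is a real-valued state-morphism `s₀` with `s(x) = s₀(x) • 1_T` for all `x`. -/
theorem ct_state_morphism_maximal_kernel_iff_scalar
    {T : Type*} [TopologicalSpace T] [CompactSpace T] [T2Space T] [Nonempty T]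
    (u : G) (hu : 0 ≤ u) (hustrong : ∀ g : G, ∃ n : ℕ, 1 ≤ n ∧ g ≤ n • u)
    (s : G → C(T, ℝ))
    (hs0 : s 0 = 0) (hs1 : s u = 1)
    (hrange : ∀ x : G, 0 ≤ x → x ≤ u → 0 ≤ s x ∧ s x ≤ 1)
    (hoplus : ∀ x y : G, 0 ≤ x → x ≤ u → 0 ≤ y → y ≤ u →
      s ((x + y) ⊓ u) = (s x + s y) ⊓ 1)
    (hnegl : ∀ x : G, 0 ≤ x → x ≤ u → s (u + -x) = 1 - s x)
    (hnegr : ∀ x : G, 0 ≤ x → x ≤ u → s (-x + u) = 1 - s x) :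
    IsMaximalMVIdeal u {x : G | (0 ≤ x ∧ x ≤ u) ∧ s x = 0} ↔
    ∃ s₀ : G → ℝ,
      s₀ 0 = 0 ∧ s₀ u = 1 ∧
      (∀ x : G, 0 ≤ x → x ≤ u → 0 ≤ s₀ x ∧ s₀ x ≤ 1) ∧
      (∀ x y : G, 0 ≤ x → x ≤ u → 0 ≤ y → y ≤ u →
        s₀ ((x + y) ⊓ u) = min (s₀ x + s₀ y) 1) ∧
      (∀ x : G, 0 ≤ x → x ≤ u → s₀ (u + -x) = 1 - s₀ x) ∧
      (∀ x : G, 0 ≤ x → x ≤ u → s₀ (-x + u) = 1 - s₀ x) ∧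
      (∀ x : G, 0 ≤ x → x ≤ u → s x = s₀ x • (1 : C(T, ℝ))) :=
  ct_state_morphism_maximal_kernel_iff_scalar_general u hu s hs0 hs1 hrange hoplus hnegl hnegr

end
end

section
/- Let M = Γ(G, u) for a unital ℓ-group (G, u), and let R be a Dedekind complete Riesz space. Then the space J(M, R) of R-Jordan signed measures on M, ordered by m₁ ≤⁺ m₂ iff m₂ - m₁ is an R-measure, is a Dedekind complete Riesz space. Moreover, for a nonempty family {mᵢ} bounded above, its supremum is given by (⋁ᵢ mᵢ)(x) = sup { d(x₁)+...+d(xₙ) : x = x₁+...+xₙ } where d(y) = supᵢ mᵢ(y). -/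
/-!
Let `d(y) = ⨆ᵢ mᵢ(y)`. It is only subadditive on `[0, u]`, but `D(x) = sup Σ d(xₖ)`, taken over
decompositions `x = x₁ + ⋯ + xₙ` into positive parts, is additive: concatenating decompositions
gives `D(x) + D(y) ≤ D(x + y)`, and the strong Riesz decomposition property (RDP₂) of the
ℓ-group refines a decomposition of `x + y` into decompositions of `x` and of `y`, which gives the
converse. Every additive upper bound of the `mᵢ` dominates all the sums, so `D` is the least upper
bound, and it is a Jordan signed measure because `D - mᵢ` is a positive measure. Infima are the
same construction in the order dual of `R`, and `c • (p - q)` splits along `c = c⁺ - c⁻`.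
-/

section JordanSignedMeasures

variable {G R : Type*}

section RieszDecomposition

variable [Lattice G] [AddGroup G] [AddLeftMono G] [AddRightMono G]

theorem exists_decomposition_of_le_add {a x y : G} (ha : 0 ≤ a) (hx : 0 ≤ x) (hy : 0 ≤ y)
    (haxy : a ≤ x + y) :
    ∃ a₁ a₂ : G, 0 ≤ a₁ ∧ 0 ≤ a₂ ∧ a₁ ≤ x ∧ a₂ ≤ y ∧ a = a₁ + a₂ ∧
      -a + (x + y) = (-a₁ + x) + (-a₂ + y) := by
  set w := -x + a
  have hpos : -(a ⊓ x) + a = w⁺ := by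
    rw [neg_inf, sup_add, neg_add_cancel, posPart_def, sup_comm]
  have hneg : -(a ⊓ x) + x = w⁻ := by
    rw [neg_inf, sup_add, neg_add_cancel, negPart_def, neg_add_rev, neg_neg]
  -- `w⁺ + w⁻ = |w| = w⁻ + w⁺`, so the two remainders commute although `G` need not be commutative
  have hcomm : AddCommute (-(a ⊓ x) + a) (-(a ⊓ x) + x) := by
    rw [hpos, hneg]
    exact (posPart_add_negPart w).trans (negPart_add_posPart w).symm
  refine ⟨a ⊓ x, -(a ⊓ x) + a, le_inf ha hx, le_neg_add_iff_add_le.2 (by simp), inf_le_right,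
    hpos ▸ sup_le (neg_add_le_iff_le_add.2 haxy) hy, (add_neg_cancel_left _ _).symm, ?_⟩
  conv_lhs => rw [← add_neg_cancel_left (a ⊓ x) a, neg_add_rev, add_assoc,
    ← add_assoc (-(a ⊓ x)), ← add_assoc, hcomm.neg_left.eq, add_assoc]

theorem List.exists_decomposition_of_sum_eq_add :
    ∀ (l : List G), (∀ a ∈ l, 0 ≤ a) → ∀ {x y : G}, 0 ≤ x → 0 ≤ y → l.sum = x + y →
      ∃ lp : List (G × G), (∀ p ∈ lp, 0 ≤ p.1 ∧ 0 ≤ p.2) ∧ lp.map (fun p => p.1 + p.2) = l ∧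
        (lp.map Prod.fst).sum = x ∧ (lp.map Prod.snd).sum = y
  | [], _, x, y, hx, hy, hsum => by
    obtain ⟨rfl, rfl⟩ := (add_eq_zero_iff_of_nonneg hx hy).1 hsum.symm
    exact ⟨[], by simp⟩
  | a :: t, hl, x, y, hx, hy, hsum => by
    rw [List.forall_mem_cons] at hl
    rw [List.sum_cons] at hsum
    obtain ⟨a₁, a₂, ha₁, ha₂, ha₁x, ha₂y, rfl, hrest⟩ := exists_decomposition_of_le_add hl.1 hx hy
      (hsum ▸ le_add_of_nonneg_right (List.sum_nonneg hl.2))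
    rw [← hsum, neg_add_cancel_left] at hrest
    obtain ⟨lp, hlp, rfl, hfst, hsnd⟩ := exists_decomposition_of_sum_eq_add t hl.2
      (le_neg_add_iff_add_le.2 (by simpa using ha₁x))
      (le_neg_add_iff_add_le.2 (by simpa using ha₂y)) hrest
    exact ⟨(a₁, a₂) :: lp, List.forall_mem_cons.2 ⟨⟨ha₁, ha₂⟩, hlp⟩, rfl, by simp [hfst],
      by simp [hsnd]⟩

end RieszDecomposition

/-- A function on `G` stands for a map on `Γ(G, u) = [0, u]`; its values outside `[0, u]` are
unconstrained. -/
def IsIntervalAdditive [Add G] [Zero G] [LE G] [Add R] (u : G) (m : G → R) : Prop :=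
  ∀ x y : G, 0 ≤ x → 0 ≤ y → x + y ≤ u → m (x + y) = m x + m y

def IsIntervalMeasure [Add G] [Zero G] [LE G] [Add R] [Zero R] [LE R] (u : G) (m : G → R) :
    Prop :=
  (∀ x : G, 0 ≤ x → x ≤ u → 0 ≤ m x) ∧ IsIntervalAdditive u m

def IsJordanSignedMeasure [Add G] [Zero G] [LE G] [AddGroup R] [LE R] (u : G) (m : G → R) :
    Prop :=
  ∃ p q : G → R, IsIntervalMeasure u p ∧ IsIntervalMeasure u q ∧ ∀ x : G, m x = p x - q x

def JordanLE [Add G] [Zero G] [LE G] [AddGroup R] [LE R] (u : G) (m₁ m₂ : G → R) : Prop :=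
  IsIntervalMeasure u (fun x => m₂ x - m₁ x)

def decompositionSums [AddMonoid G] [LE G] [AddMonoid R] (f : G → R) (x : G) : Set R :=
  {r : R | ∃ l : List G, l ≠ [] ∧ (∀ a ∈ l, 0 ≤ a) ∧ l.sum = x ∧ (l.map f).sum = r}

section OrderedMonoid

variable [AddMonoid G] [Preorder G] [AddLeftMono G] [AddRightMono G] {u : G}

theorem List.mem_Icc_of_sum_le {l : List G} (hl : ∀ a ∈ l, 0 ≤ a) (hlu : l.sum ≤ u) :
    ∀ a ∈ l, a ∈ Set.Icc 0 u := fun a ha =>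
  ⟨hl a ha, le_trans (by simpa using (List.singleton_sublist.2 ha).sum_le_sum hl) hlu⟩

theorem IsIntervalAdditive.map_list_sum [AddCommGroup R] {m : G → R}
    (hm : IsIntervalAdditive u m) :
    ∀ {l : List G}, (∀ a ∈ l, 0 ≤ a) → l.sum ≤ u → m l.sum = (l.map m).sum
  | [], _, hlu => by simpa using hm 0 0 le_rfl le_rfl (by simpa using hlu)
  | a :: t, hl, hlu => by
    rw [List.forall_mem_cons] at hl
    rw [List.sum_cons] at hlu ⊢
    rw [List.map_cons, List.sum_cons, hm a t.sum hl.1 (List.sum_nonneg hl.2) hlu,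
      hm.map_list_sum hl.2 ((le_add_of_nonneg_left hl.1).trans hlu)]

end OrderedMonoid

section DecompositionSums

variable [AddMonoid G] [Preorder G]

theorem self_mem_decompositionSums [AddMonoid R] (f : G → R) {x : G} (hx : 0 ≤ x) :
    f x ∈ decompositionSums f x :=
  ⟨[x], List.cons_ne_nil _ _, by simpa using hx, List.sum_singleton, by simp⟩

theorem add_mem_decompositionSums [AddMonoid R] {f : G → R} {x y : G} {r s : R}
    (hr : r ∈ decompositionSums f x) (hs : s ∈ decompositionSums f y) :
    r + s ∈ decompositionSums f (x + y) := by
  obtain ⟨l₁, hl₁, hl₁0, rfl, rfl⟩ := hr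
  obtain ⟨l₂, -, hl₂0, rfl, rfl⟩ := hs
  exact ⟨l₁ ++ l₂, by simp [hl₁], List.forall_mem_append.2 ⟨hl₁0, hl₂0⟩, List.sum_append,
    by simp⟩

variable [AddLeftMono G] [AddRightMono G] [AddCommGroup R] [PartialOrder R] [AddLeftMono R]
  {u : G}

theorem le_of_mem_decompositionSums {f h : G → R} (hh : IsIntervalAdditive u h)
    (hfh : ∀ x, 0 ≤ x → x ≤ u → f x ≤ h x) {x : G} (hxu : x ≤ u) {r : R}
    (hr : r ∈ decompositionSums f x) : r ≤ h x := by
  obtain ⟨l, -, hl, rfl, rfl⟩ := hr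
  have hlu := List.mem_Icc_of_sum_le hl hxu
  rw [hh.map_list_sum hl hxu]
  exact List.sum_le_sum fun a ha => hfh a (hlu a ha).1 (hlu a ha).2

end DecompositionSums

section Jordan

variable [Add G] [Zero G] [LE G] [AddCommGroup R] {u : G} {m m' p q : G → R}

theorem IsIntervalAdditive.add (hp : IsIntervalAdditive u p) (hq : IsIntervalAdditive u q) :
    IsIntervalAdditive u (fun x => p x + q x) :=
  fun x y hx hy hxy => by simp only [hp x y hx hy hxy, hq x y hx hy hxy]; abel

theorem IsIntervalAdditive.sub (hp : IsIntervalAdditive u p) (hq : IsIntervalAdditive u q) :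
    IsIntervalAdditive u (fun x => p x - q x) :=
  fun x y hx hy hxy => by simp only [hp x y hx hy hxy, hq x y hx hy hxy]; abel

variable [PartialOrder R]

theorem IsIntervalMeasure.smul [Module ℝ R] [PosSMulMono ℝ R] {t : ℝ} (ht : 0 ≤ t)
    (hp : IsIntervalMeasure u p) : IsIntervalMeasure u (fun x => t • p x) :=
  ⟨fun x hx hxu => smul_nonneg ht (hp.1 x hx hxu),
    fun x y hx hy hxy => by simp only [hp.2 x y hx hy hxy, smul_add]⟩

theorem IsJordanSignedMeasure.isIntervalAdditive (hm : IsJordanSignedMeasure u m) :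
    IsIntervalAdditive u m := by
  obtain ⟨p, q, hp, hq, hpq⟩ := hm
  rw [funext hpq]
  exact hp.2.sub hq.2

variable [AddLeftMono R]

theorem IsIntervalMeasure.add (hp : IsIntervalMeasure u p) (hq : IsIntervalMeasure u q) :
    IsIntervalMeasure u (fun x => p x + q x) :=
  ⟨fun x hx hxu => add_nonneg (hp.1 x hx hxu) (hq.1 x hx hxu), hp.2.add hq.2⟩

theorem jordanLE_iff (hm : IsIntervalAdditive u m) (hm' : IsIntervalAdditive u m') :
    JordanLE u m m' ↔ ∀ x, 0 ≤ x → x ≤ u → m x ≤ m' x :=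
  ⟨fun h x hx hxu => sub_nonneg.1 (h.1 x hx hxu),
    fun h => ⟨fun x hx hxu => sub_nonneg.2 (h x hx hxu), hm'.sub hm⟩⟩

theorem IsJordanSignedMeasure.of_le (hm : IsJordanSignedMeasure u m)
    (hm' : IsIntervalAdditive u m') (hle : ∀ x, 0 ≤ x → x ≤ u → m x ≤ m' x) :
    IsJordanSignedMeasure u m' := by
  obtain ⟨p, q, hp, hq, hpq⟩ := id hm
  refine ⟨fun x => (m' x - m x) + p x, q, ?_, hq, fun x => ?_⟩
  · exact ((jordanLE_iff hm.isIntervalAdditive hm').2 hle).add hp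
  · simp only [hpq x]; abel

theorem IsJordanSignedMeasure.of_ge (hm : IsJordanSignedMeasure u m)
    (hm' : IsIntervalAdditive u m') (hle : ∀ x, 0 ≤ x → x ≤ u → m' x ≤ m x) :
    IsJordanSignedMeasure u m' := by
  obtain ⟨p, q, hp, hq, hpq⟩ := id hm
  refine ⟨p, fun x => (m x - m' x) + q x, hp, ?_, fun x => ?_⟩
  · exact ((jordanLE_iff hm' hm.isIntervalAdditive).2 hle).add hq
  · simp only [hpq x]; abel

theorem IsJordanSignedMeasure.smul [Module ℝ R] [PosSMulMono ℝ R]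
    (hm : IsJordanSignedMeasure u m) (c : ℝ) : IsJordanSignedMeasure u (fun x => c • m x) := by
  obtain ⟨p, q, hp, hq, hpq⟩ := hm
  refine ⟨fun x => c⁺ • p x + c⁻ • q x, fun x => c⁺ • q x + c⁻ • p x,
    (hp.smul (posPart_nonneg c)).add (hq.smul (negPart_nonneg c)),
    (hq.smul (posPart_nonneg c)).add (hp.smul (negPart_nonneg c)), fun x => ?_⟩
  simp only [hpq x]
  conv_lhs => rw [← posPart_sub_negPart c]
  module

end Jordan

section Supremum

variable [Lattice G] [AddGroup G] [AddLeftMono G] [AddRightMono G] {u : G}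

theorem exists_le_add_of_mem_decompositionSums_add [AddCommGroup R] [PartialOrder R]
    [AddLeftMono R] {f : G → R}
    (hf : ∀ x y, 0 ≤ x → 0 ≤ y → x + y ≤ u → f (x + y) ≤ f x + f y) {x y : G} (hx : 0 ≤ x)
    (hy : 0 ≤ y) (hxy : x + y ≤ u) {r : R} (hr : r ∈ decompositionSums f (x + y)) :
    ∃ r₁ ∈ decompositionSums f x, ∃ r₂ ∈ decompositionSums f y, r ≤ r₁ + r₂ := by
  obtain ⟨l, hne, hl, hsum, rfl⟩ := hr
  have hlu := List.mem_Icc_of_sum_le hl (hsum ▸ hxy)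
  obtain ⟨lp, hlp, rfl, hfst, hsnd⟩ := l.exists_decomposition_of_sum_eq_add hl hx hy hsum
  have hne' : lp ≠ [] := by rintro rfl; exact hne rfl
  refine ⟨_, ⟨lp.map Prod.fst, by simpa using hne', List.forall_mem_map.2 fun p hp => (hlp p hp).1,
    hfst, rfl⟩, _, ⟨lp.map Prod.snd, by simpa using hne',
    List.forall_mem_map.2 fun p hp => (hlp p hp).2, hsnd, rfl⟩, ?_⟩
  rw [List.map_map, List.map_map, List.map_map, ← List.sum_map_add]
  exact List.sum_le_sum fun p hp =>
    hf p.1 p.2 (hlp p hp).1 (hlp p hp).2 (hlu _ (List.mem_map_of_mem hp)).2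

variable [ConditionallyCompleteLattice R] [AddCommGroup R] [AddLeftMono R]
  {ι : Type*} [Nonempty ι] {mi : ι → G → R} {m₀ : G → R}

def decompositionSup (mi : ι → G → R) (x : G) : R :=
  sSup (decompositionSums (fun y => ⨆ i, mi i y) x)

def decompositionInf (mi : ι → G → R) (x : G) : R :=
  sInf (decompositionSums (fun y => ⨅ i, mi i y) x)

theorem bddAbove_decompositionSums (hm₀ : IsIntervalAdditive u m₀)
    (hbound : ∀ i x, 0 ≤ x → x ≤ u → mi i x ≤ m₀ x) {x : G} (hxu : x ≤ u) :
    BddAbove (decompositionSums (fun y => ⨆ i, mi i y) x) :=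
  ⟨m₀ x, fun _ hr => le_of_mem_decompositionSums hm₀
    (fun y hy hyu => ciSup_le fun i => hbound i y hy hyu) hxu hr⟩

theorem iSup_apply_add_le (hmi : ∀ i, IsIntervalAdditive u (mi i))
    (hbound : ∀ i x, 0 ≤ x → x ≤ u → mi i x ≤ m₀ x) (x y : G) (hx : 0 ≤ x) (hy : 0 ≤ y)
    (hxy : x + y ≤ u) : ⨆ i, mi i (x + y) ≤ (⨆ i, mi i x) + ⨆ i, mi i y := by
  have hbdd : ∀ z, 0 ≤ z → z ≤ u → BddAbove (Set.range fun i => mi i z) :=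
    fun z hz hzu => ⟨m₀ z, Set.forall_mem_range.2 fun i => hbound i z hz hzu⟩
  refine ciSup_le fun i => ?_
  rw [hmi i x y hx hy hxy]
  exact add_le_add (le_ciSup (hbdd x hx ((le_add_of_nonneg_right hy).trans hxy)) i)
    (le_ciSup (hbdd y hy ((le_add_of_nonneg_left hx).trans hxy)) i)

theorem isIntervalAdditive_decompositionSup (hmi : ∀ i, IsIntervalAdditive u (mi i))
    (hm₀ : IsIntervalAdditive u m₀) (hbound : ∀ i x, 0 ≤ x → x ≤ u → mi i x ≤ m₀ x) :
    IsIntervalAdditive u (decompositionSup mi) := by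
  intro x y hx hy hxy
  have hbdd := fun {z} (hz : z ≤ u) => bddAbove_decompositionSums hm₀ hbound hz
  have hne := fun {z} (hz : 0 ≤ z) => (⟨_, self_mem_decompositionSums _ hz⟩ :
    (decompositionSums (fun y => ⨆ i, mi i y) z).Nonempty)
  have hxu : x ≤ u := (le_add_of_nonneg_right hy).trans hxy
  have hyu : y ≤ u := (le_add_of_nonneg_left hx).trans hxy
  apply le_antisymm
  · refine csSup_le (hne (add_nonneg hx hy)) fun r hr => ?_
    obtain ⟨r₁, hr₁, r₂, hr₂, hr⟩ := exists_le_add_of_mem_decompositionSums_add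
      (iSup_apply_add_le hmi hbound) hx hy hxy hr
    exact hr.trans (add_le_add (le_csSup (hbdd hxu) hr₁) (le_csSup (hbdd hyu) hr₂))
  · rw [decompositionSup, decompositionSup, ← csSup_add (hne hx) (hbdd hxu) (hne hy) (hbdd hyu)]
    exact csSup_le_csSup (hbdd hxy) (Set.add_nonempty.2 ⟨hne hx, hne hy⟩)
      (Set.add_subset_iff.2 fun _ hr _ hs => add_mem_decompositionSums hr hs)

theorem le_decompositionSup (hm₀ : IsIntervalAdditive u m₀)
    (hbound : ∀ i x, 0 ≤ x → x ≤ u → mi i x ≤ m₀ x) (i : ι) (x : G) (hx : 0 ≤ x)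
    (hxu : x ≤ u) : mi i x ≤ decompositionSup mi x :=
  (le_ciSup ⟨m₀ x, Set.forall_mem_range.2 fun i => hbound i x hx hxu⟩ i).trans
    (le_csSup (bddAbove_decompositionSums hm₀ hbound hxu) (self_mem_decompositionSums _ hx))

theorem decompositionSup_le {h : G → R} (hh : IsIntervalAdditive u h)
    (hle : ∀ i x, 0 ≤ x → x ≤ u → mi i x ≤ h x) {x : G} (hx : 0 ≤ x) (hxu : x ≤ u) :
    decompositionSup mi x ≤ h x :=
  csSup_le ⟨_, self_mem_decompositionSums _ hx⟩ fun _ hr =>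
    le_of_mem_decompositionSums hh (fun y hy hyu => ciSup_le fun i => hle i y hy hyu) hxu hr

theorem isJordanLUB_decompositionSup (hmi : ∀ i, IsJordanSignedMeasure u (mi i))
    (hm₀ : IsJordanSignedMeasure u m₀) (hbound : ∀ i, JordanLE u (mi i) m₀) :
    IsJordanSignedMeasure u (decompositionSup mi) ∧ (∀ i, JordanLE u (mi i) (decompositionSup mi)) ∧
      ∀ h, IsJordanSignedMeasure u h → (∀ i, JordanLE u (mi i) h) →
        JordanLE u (decompositionSup mi) h := by
  have hadd i := (hmi i).isIntervalAdditive
  have hbound' i := (jordanLE_iff (hadd i) hm₀.isIntervalAdditive).1 (hbound i)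
  have hD := isIntervalAdditive_decompositionSup hadd hm₀.isIntervalAdditive hbound'
  have hle i := le_decompositionSup hm₀.isIntervalAdditive hbound' i
  obtain ⟨i₀⟩ := ‹Nonempty ι›
  refine ⟨(hmi i₀).of_le hD (hle i₀), fun i => (jordanLE_iff (hadd i) hD).2 (hle i),
    fun h hh hub => (jordanLE_iff hD hh.isIntervalAdditive).2 fun x hx hxu => ?_⟩
  exact decompositionSup_le hh.isIntervalAdditive
    (fun i => (jordanLE_iff (hadd i) hh.isIntervalAdditive).1 (hub i)) hx hxu

theorem isJordanGLB_decompositionInf (hmi : ∀ i, IsJordanSignedMeasure u (mi i))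
    (hm₀ : IsJordanSignedMeasure u m₀) (hbound : ∀ i, JordanLE u m₀ (mi i)) :
    IsJordanSignedMeasure u (decompositionInf mi) ∧ (∀ i, JordanLE u (decompositionInf mi) (mi i)) ∧
      ∀ h, IsJordanSignedMeasure u h → (∀ i, JordanLE u h (mi i)) →
        JordanLE u h (decompositionInf mi) := by
  have hadd i := (hmi i).isIntervalAdditive
  have hbound' i := (jordanLE_iff hm₀.isIntervalAdditive (hadd i)).1 (hbound i)
  -- `decompositionInf mi` is, definitionally, `decompositionSup mi` computed in `Rᵒᵈ`
  have hD : IsIntervalAdditive u (decompositionInf mi) :=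
    isIntervalAdditive_decompositionSup (R := Rᵒᵈ) hadd hm₀.isIntervalAdditive hbound'
  have hle i : ∀ x, 0 ≤ x → x ≤ u → decompositionInf mi x ≤ mi i x :=
    le_decompositionSup (R := Rᵒᵈ) hm₀.isIntervalAdditive hbound' i
  obtain ⟨i₀⟩ := ‹Nonempty ι›
  refine ⟨(hmi i₀).of_ge hD (hle i₀), fun i => (jordanLE_iff hD (hadd i)).2 (hle i),
    fun h hh hlb => (jordanLE_iff hh.isIntervalAdditive hD).2 fun x hx hxu => ?_⟩
  exact decompositionSup_le (R := Rᵒᵈ) hh.isIntervalAdditive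
    (fun i => (jordanLE_iff hh.isIntervalAdditive (hadd i)).1 (hlb i)) hx hxu

end Supremum

end JordanSignedMeasures

theorem jordan_signed_measures_dedekind_complete_riesz_general
    {G R : Type*}
    [Lattice G] [AddGroup G]
    [CovariantClass G G (· + ·) (· ≤ ·)]
    [CovariantClass G G (Function.swap (· + ·)) (· ≤ ·)]
    [ConditionallyCompleteLattice R] [AddCommGroup R]
    [CovariantClass R R (· + ·) (· ≤ ·)]
    [Module ℝ R] [PosSMulMono ℝ R]
    (u : G)
    (IsMeas IsJordan : (G → R) → Prop)
    (le' : (G → R) → (G → R) → Prop)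
    (hIsMeas : ∀ m : G → R, IsMeas m ↔
      ((∀ x : G, 0 ≤ x → x ≤ u → 0 ≤ m x) ∧
       (∀ x y : G, 0 ≤ x → 0 ≤ y → x + y ≤ u → m (x + y) = m x + m y)))
    (hIsJordan : ∀ m : G → R, IsJordan m ↔
      ∃ p q : G → R, IsMeas p ∧ IsMeas q ∧ ∀ x : G, m x = p x - q x)
    (hle : ∀ m₁ m₂ : G → R, le' m₁ m₂ ↔ IsMeas (fun x => m₂ x - m₁ x)) :
    -- every nonempty bounded-above family has a least upper bound, given by the formula
    (∀ (ι : Type) [Nonempty ι] (mi : ι → (G → R)), (∀ i, IsJordan (mi i)) →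
      (∃ m₀ : G → R, IsJordan m₀ ∧ ∀ i, le' (mi i) m₀) →
      ∃ msup : G → R, IsJordan msup ∧ (∀ i, le' (mi i) msup) ∧
        (∀ h : G → R, IsJordan h → (∀ i, le' (mi i) h) → le' msup h) ∧
        (∀ x : G, 0 ≤ x → x ≤ u →
          msup x = sSup {r : R | ∃ l : List G, l ≠ [] ∧ (∀ a ∈ l, 0 ≤ a) ∧
            l.sum = x ∧
            (l.map (fun y => sSup (Set.range (fun i => mi i y)))).sum = r})) ∧
    -- every nonempty bounded-below family has a greatest lower bound, given dually
    (∀ (ι : Type) [Nonempty ι] (mi : ι → (G → R)), (∀ i, IsJordan (mi i)) →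
      (∃ m₀ : G → R, IsJordan m₀ ∧ ∀ i, le' m₀ (mi i)) →
      ∃ minf : G → R, IsJordan minf ∧ (∀ i, le' minf (mi i)) ∧
        (∀ h : G → R, IsJordan h → (∀ i, le' h (mi i)) → le' h minf) ∧
        (∀ x : G, 0 ≤ x → x ≤ u →
          minf x = sInf {r : R | ∃ l : List G, l ≠ [] ∧ (∀ a ∈ l, 0 ≤ a) ∧
            l.sum = x ∧
            (l.map (fun y => sInf (Set.range (fun i => mi i y)))).sum = r})) ∧
    -- J(M,R) is a real vector space: closed under scalar multiplication
    (∀ (c : ℝ) (m : G → R), IsJordan m → IsJordan (fun x => c • m x)) := by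
  obtain rfl : IsMeas = IsIntervalMeasure u := funext fun m => propext (hIsMeas m)
  obtain rfl : IsJordan = IsJordanSignedMeasure u := funext fun m => propext (hIsJordan m)
  obtain rfl : le' = JordanLE u := funext₂ fun m₁ m₂ => propext (hle m₁ m₂)
  refine ⟨fun ι _ mi hmi ⟨m₀, hm₀, hbound⟩ => ?_, fun ι _ mi hmi ⟨m₀, hm₀, hbound⟩ => ?_,
    fun c m hm => hm.smul c⟩
  · obtain ⟨hJ, hub, hleast⟩ := isJordanLUB_decompositionSup hmi hm₀ hbound
    exact ⟨decompositionSup mi, hJ, hub, hleast, fun _ _ _ => rfl⟩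
  · obtain ⟨hJ, hlb, hgreatest⟩ := isJordanGLB_decompositionInf hmi hm₀ hbound
    exact ⟨decompositionInf mi, hJ, hlb, hgreatest, fun _ _ _ => rfl⟩

/-- For `M = Γ(G,u)` and a Dedekind complete Riesz space `R`, the space
`J(M,R)` of `R`-Jordan signed measures, ordered by `m₁ ≤⁺ m₂` iff `m₂ - m₁` is an
`R`-measure, is a Dedekind complete Riesz space; the supremum of a nonempty bounded
family is given by `(⋁ᵢ mᵢ)(x) = sup { d(x₁)+⋯+d(xₙ) : x = x₁+⋯+xₙ }` with
`d(y) = supᵢ mᵢ(y)`. -/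
theorem jordan_signed_measures_dedekind_complete_riesz
    {G R : Type*}
    [Lattice G] [AddGroup G]
    [CovariantClass G G (· + ·) (· ≤ ·)]
    [CovariantClass G G (Function.swap (· + ·)) (· ≤ ·)]
    [ConditionallyCompleteLattice R] [AddCommGroup R]
    [CovariantClass R R (· + ·) (· ≤ ·)]
    [Module ℝ R] [PosSMulMono ℝ R]
    (u : G) (hu : 0 ≤ u) (hustrong : ∀ g : G, ∃ n : ℕ, 1 ≤ n ∧ g ≤ n • u)
    (IsMeas IsJordan : (G → R) → Prop)
    (le' : (G → R) → (G → R) → Prop)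
    (hIsMeas : ∀ m : G → R, IsMeas m ↔
      ((∀ x : G, 0 ≤ x → x ≤ u → 0 ≤ m x) ∧
       (∀ x y : G, 0 ≤ x → 0 ≤ y → x + y ≤ u → m (x + y) = m x + m y)))
    (hIsJordan : ∀ m : G → R, IsJordan m ↔
      ∃ p q : G → R, IsMeas p ∧ IsMeas q ∧ ∀ x : G, m x = p x - q x)
    (hle : ∀ m₁ m₂ : G → R, le' m₁ m₂ ↔ IsMeas (fun x => m₂ x - m₁ x)) :
    -- every nonempty bounded-above family has a least upper bound, given by the formula
    (∀ (ι : Type) [Nonempty ι] (mi : ι → (G → R)), (∀ i, IsJordan (mi i)) →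
      (∃ m₀ : G → R, IsJordan m₀ ∧ ∀ i, le' (mi i) m₀) →
      ∃ msup : G → R, IsJordan msup ∧ (∀ i, le' (mi i) msup) ∧
        (∀ h : G → R, IsJordan h → (∀ i, le' (mi i) h) → le' msup h) ∧
        (∀ x : G, 0 ≤ x → x ≤ u →
          msup x = sSup {r : R | ∃ l : List G, l ≠ [] ∧ (∀ a ∈ l, 0 ≤ a) ∧
            l.sum = x ∧
            (l.map (fun y => sSup (Set.range (fun i => mi i y)))).sum = r})) ∧
    -- every nonempty bounded-below family has a greatest lower bound, given dually
    (∀ (ι : Type) [Nonempty ι] (mi : ι → (G → R)), (∀ i, IsJordan (mi i)) →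
      (∃ m₀ : G → R, IsJordan m₀ ∧ ∀ i, le' m₀ (mi i)) →
      ∃ minf : G → R, IsJordan minf ∧ (∀ i, le' minf (mi i)) ∧
        (∀ h : G → R, IsJordan h → (∀ i, le' h (mi i)) → le' h minf) ∧
        (∀ x : G, 0 ≤ x → x ≤ u →
          minf x = sInf {r : R | ∃ l : List G, l ≠ [] ∧ (∀ a ∈ l, 0 ≤ a) ∧
            l.sum = x ∧
            (l.map (fun y => sInf (Set.range (fun i => mi i y)))).sum = r})) ∧
    -- J(M,R) is a real vector space: closed under scalar multiplication
    (∀ (c : ℝ) (m : G → R), IsJordan m → IsJordan (fun x => c • m x)) :=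
  jordan_signed_measures_dedekind_complete_riesz_general u IsMeas IsJordan le' hIsMeas hIsJordan hle
end
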